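/- With the construction of the previous setting (τ obtained from v by directional integration), the discrete inf-sup condition sup_{0≠τ∈Σ_k(𝒯_h)} (div τ, v)_{L²(Ω)} / ‖τ‖_{H(div,Ω)} ≥ √(2/3) ‖v‖_{L²(Ω)} holds for every v ∈ V_k(𝒯_h). -/

import Mathlib

open intervalIntegral MvPolynomial

/-- Evaluation of a bivariate polynomial (variable `0` is `x`, variable `1` is `y`). -/
noncomputable def ev2 (p : MvPolynomial (Fin 2) ℝ) (x y : ℝ) : ℝ :=
  MvPolynomial.eval ![x, y] p

/-- Membership in `P_k \ span{y^k}`. -/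
def memPkNoYk (k : ℕ) (p : MvPolynomial (Fin 2) ℝ) : Prop :=
  p.totalDegree ≤ k ∧ MvPolynomial.coeff (Finsupp.single 1 k) p = 0

/-- Membership in `P_k \ span{x^k}`. -/
def memPkNoXk (k : ℕ) (p : MvPolynomial (Fin 2) ℝ) : Prop :=
  p.totalDegree ≤ k ∧ MvPolynomial.coeff (Finsupp.single 0 k) p = 0

/-- First component of the enriched BDFM space:
`P_k \ span{y^k} ⊕ span{x^{k+1}, x² y^{k-1}}`. -/
def memH1 (k : ℕ) (q : MvPolynomial (Fin 2) ℝ) : Prop :=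
  ∃ p : MvPolynomial (Fin 2) ℝ, ∃ a b : ℝ, memPkNoYk k p ∧
    q = p + MvPolynomial.C a * X 0 ^ (k + 1) + MvPolynomial.C b * X 0 ^ 2 * X 1 ^ (k - 1)

/-- Second component of the enriched BDFM space. -/
def memH2 (k : ℕ) (q : MvPolynomial (Fin 2) ℝ) : Prop :=
  ∃ p : MvPolynomial (Fin 2) ℝ, ∃ a b : ℝ, memPkNoXk k p ∧
    q = p + MvPolynomial.C a * X 1 ^ (k + 1) + MvPolynomial.C b * X 1 ^ 2 * X 0 ^ (k - 1)

/-- The serendipity space of order `k`: `S_k = P_k + span{x^k y, x y^k}`. -/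
def memS (k : ℕ) (q : MvPolynomial (Fin 2) ℝ) : Prop :=
  ∃ p : MvPolynomial (Fin 2) ℝ, ∃ a b : ℝ, p.totalDegree ≤ k ∧
    q = p + MvPolynomial.C a * X 0 ^ k * X 1 + MvPolynomial.C b * X 0 * X 1 ^ k

/-- Local displacement space
`V_k(K) = (P_{k-1})² ⊕ span{(x^k,0),(0,y^k),(xy^{k-1},0),(0,x^{k-1}y)}`. -/
def memVk (k : ℕ) (q1 q2 : MvPolynomial (Fin 2) ℝ) : Prop :=
  ∃ p1 p2 : MvPolynomial (Fin 2) ℝ, ∃ a b c d : ℝ,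
    p1.totalDegree ≤ k - 1 ∧ p2.totalDegree ≤ k - 1 ∧
    q1 = p1 + MvPolynomial.C a * X 0 ^ k + MvPolynomial.C b * X 0 * X 1 ^ (k - 1) ∧
    q2 = p2 + MvPolynomial.C c * X 1 ^ k + MvPolynomial.C d * X 0 ^ (k - 1) * X 1

/-- Open `i`-th subinterval of `(0,1)` for the uniform partition into `N` intervals. -/
def Ix (N i : ℕ) : Set ℝ := Set.Ioo ((i : ℝ) / N) ((i + 1 : ℝ) / N)

/-- The global displacement space `V_k(𝒯_h)` on the uniform `N × N` mesh of the unit square. -/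
def meshVk (k N : ℕ) (v1 v2 : ℝ → ℝ → ℝ) : Prop :=
  ∀ i j : ℕ, i < N → j < N → ∃ q1 q2 : MvPolynomial (Fin 2) ℝ, memVk k q1 q2 ∧
    ∀ x y : ℝ, x ∈ Ix N i → y ∈ Ix N j → v1 x y = ev2 q1 x y ∧ v2 x y = ev2 q2 x y

/-- Partial derivative in the first variable. -/
noncomputable def Dx (f : ℝ → ℝ → ℝ) (x y : ℝ) : ℝ := deriv (fun t => f t y) x

/-- Partial derivative in the second variable. -/
noncomputable def Dy (f : ℝ → ℝ → ℝ) (x y : ℝ) : ℝ := deriv (fun t => f x t) y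

/-- The global stress space `Σ_k(𝒯_h)` on the uniform `N × N` mesh of the unit square:
on each element the normal stress `(τ₁₁,τ₂₂)` belongs to the enriched BDFM space and the shear
stress `τ₁₂` to the serendipity space, `τ₁₁` is continuous in `x` across vertical edges, `τ₂₂`
is continuous in `y` across horizontal edges (`H(div)`-conformity) and `τ₁₂` is globally
continuous (`H¹`-conformity). -/
def meshSigma (k N : ℕ) (t11 t12 t22 : ℝ → ℝ → ℝ) : Prop :=
  (∀ i j : ℕ, i < N → j < N → ∃ q1 q2 q12 : MvPolynomial (Fin 2) ℝ,
    memH1 k q1 ∧ memH2 k q2 ∧ memS k q12 ∧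
    ∀ x y : ℝ, x ∈ Ix N i → y ∈ Ix N j →
      t11 x y = ev2 q1 x y ∧ t22 x y = ev2 q2 x y ∧ t12 x y = ev2 q12 x y) ∧
  (∀ y ∈ Set.Ioo (0 : ℝ) 1, (∀ j : ℕ, y ≠ (j : ℝ) / N) →
    ContinuousOn (fun x => t11 x y) (Set.Icc 0 1)) ∧
  (∀ x ∈ Set.Ioo (0 : ℝ) 1, (∀ i : ℕ, x ≠ (i : ℝ) / N) →
    ContinuousOn (fun y => t22 x y) (Set.Icc 0 1)) ∧
  ContinuousOn (fun z : ℝ × ℝ => t12 z.1 z.2) (Set.Icc 0 1 ×ˢ Set.Icc 0 1)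

/-- Iterated integral over the unit square. -/
noncomputable def ii (f : ℝ → ℝ → ℝ) : ℝ := ∫ x in (0 : ℝ)..1, ∫ y in (0 : ℝ)..1, f x y

/-- First component of the (row-wise) divergence of the symmetric tensor field. -/
noncomputable def div1 (t11 t12 : ℝ → ℝ → ℝ) (x y : ℝ) : ℝ := Dx t11 x y + Dy t12 x y

/-- Second component of the (row-wise) divergence of the symmetric tensor field. -/
noncomputable def div2 (t12 t22 : ℝ → ℝ → ℝ) (x y : ℝ) : ℝ := Dx t12 x y + Dy t22 x y

/-- The `L²(Ω)` pairing `(div τ, v)`. -/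
noncomputable def pairDiv (t11 t12 t22 v1 v2 : ℝ → ℝ → ℝ) : ℝ :=
  ii (fun x y => div1 t11 t12 x y * v1 x y + div2 t12 t22 x y * v2 x y)

/-- Squared `L²` norm of the displacement field. -/
noncomputable def vNormSq (v1 v2 : ℝ → ℝ → ℝ) : ℝ :=
  ii (fun x y => (v1 x y) ^ 2 + (v2 x y) ^ 2)

/-- Squared `H(div, Ω)` norm of the symmetric tensor field. -/
noncomputable def hdivNormSq (t11 t12 t22 : ℝ → ℝ → ℝ) : ℝ :=
  ii (fun x y => (t11 x y) ^ 2 + 2 * (t12 x y) ^ 2 + (t22 x y) ^ 2) +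
    ii (fun x y => (div1 t11 t12 x y) ^ 2 + (div2 t12 t22 x y) ^ 2)

/-!
Take `τ₁₂ = 0`, `τ₁₁(x, y) = ∫₀ˣ v₁(s, y) ds` and `τ₂₂(x, y) = ∫₀ʸ v₂(x, t) dt`. Off the mesh
lines `div τ = v`, so `(div τ, v) = ‖v‖²`. On a cell, `τ₂₂` is the `y`-antiderivative of the local
polynomial of `v₂` plus a polynomial in `x` alone whose degree is at most the `x`-degree of `v₂`,
i.e. `≤ k - 1`. Since the enrichments `y^k`, `x^{k-1} y` of `V_k` integrate to the enrichments
`y^{k+1}`, `x^{k-1} y²` of BDFM, this is exactly the shape of the enriched BDFM space, and `τ₂₂`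
is continuous in `y`. The case of `τ₁₁` is the same after swapping `x` and `y`.

By Cauchy–Schwarz `(∫₀ʸ f)² ≤ y ∫₀¹ f²`, hence `‖τ₁₁‖² + ‖τ₂₂‖² ≤ ½ ‖v‖²` and
`‖τ‖²_{H(div)} ≤ (3/2) ‖v‖²`, which gives the constant `√(2/3)`. For `v = 0` any nonzero `τ` will
do.
-/

section Polynomials

lemma ev2_add (p q : MvPolynomial (Fin 2) ℝ) (x y : ℝ) :
    ev2 (p + q) x y = ev2 p x y + ev2 q x y := map_add _ p q

lemma ev2_sub (p q : MvPolynomial (Fin 2) ℝ) (x y : ℝ) :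
    ev2 (p - q) x y = ev2 p x y - ev2 q x y := map_sub _ p q

lemma ev2_mul (p q : MvPolynomial (Fin 2) ℝ) (x y : ℝ) :
    ev2 (p * q) x y = ev2 p x y * ev2 q x y := map_mul _ p q

lemma ev2_sum {α : Type*} (s : Finset α) (f : α → MvPolynomial (Fin 2) ℝ) (x y : ℝ) :
    ev2 (∑ a ∈ s, f a) x y = ∑ a ∈ s, ev2 (f a) x y := map_sum _ f s

lemma ev2_monomial (m : Fin 2 →₀ ℕ) (c x y : ℝ) :
    ev2 (monomial m c) x y = c * x ^ m 0 * y ^ m 1 := by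
  rw [ev2, eval_monomial, Finsupp.prod_fintype _ _ fun _ => pow_zero _, Fin.prod_univ_two]
  simp [mul_assoc]

@[fun_prop]
lemma Continuous.ev2 {α : Type*} [TopologicalSpace α] (p : MvPolynomial (Fin 2) ℝ) {f g : α → ℝ}
    (hf : Continuous f) (hg : Continuous g) : Continuous fun a => ev2 p (f a) (g a) :=
  (continuous_eval p).comp <| continuous_pi fun i => by fin_cases i <;> simpa

lemma ev2_rename_swap (p : MvPolynomial (Fin 2) ℝ) (x y : ℝ) :
    ev2 (rename (Equiv.swap 0 1) p) x y = ev2 p y x := by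
  rw [ev2, ev2, eval_rename]
  congr 2
  funext i
  fin_cases i <;> rfl

noncomputable def antiY (p : MvPolynomial (Fin 2) ℝ) : MvPolynomial (Fin 2) ℝ :=
  (AddMonoidAlgebra.coeff p).sum fun m c => monomial (m + Finsupp.single 1 1) (c / (m 1 + 1))

lemma antiY_add (p q : MvPolynomial (Fin 2) ℝ) : antiY (p + q) = antiY p + antiY q := by
  rw [antiY, antiY, antiY, AddMonoidAlgebra.coeff_add]
  exact Finsupp.sum_add_index' (fun _ => by simp) fun _ _ _ => by rw [add_div, map_add]

lemma antiY_monomial (m : Fin 2 →₀ ℕ) (c : ℝ) :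
    antiY (monomial m c) = monomial (m + Finsupp.single 1 1) (c / (m 1 + 1)) :=
  sum_monomial_eq (by simp)

lemma hasDerivAt_ev2_antiY (p : MvPolynomial (Fin 2) ℝ) (x y : ℝ) :
    HasDerivAt (fun t => ev2 (antiY p) x t) (ev2 p x y) y := by
  induction p using MvPolynomial.induction_on' with
  | monomial m c =>
    have hm : (m 1 : ℝ) + 1 ≠ 0 := by positivity
    have h := (hasDerivAt_pow (m 1 + 1) y).const_mul (c / (m 1 + 1) * x ^ m 0)
    simp only [antiY_monomial, ev2_monomial, Finsupp.add_apply, Finsupp.single_eq_same,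
      Finsupp.single_apply, Fin.one_eq_zero_iff, OfNat.ofNat_ne_one, if_false, add_zero]
    refine h.congr_deriv ?_
    push_cast
    field_simp
  | add p q hp hq =>
    simp only [antiY_add, ev2_add]
    exact hp.add hq

lemma antiY_eq_sum (p : MvPolynomial (Fin 2) ℝ) :
    antiY p = ∑ m ∈ p.support, monomial (m + Finsupp.single 1 1) (p.coeff m / (m 1 + 1)) :=
  sum_def

lemma coeff_antiY_of_eq_zero (p : MvPolynomial (Fin 2) ℝ) {n : Fin 2 →₀ ℕ} (hn : n 1 = 0) :
    (antiY p).coeff n = 0 := by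
  rw [antiY_eq_sum, coeff_sum]
  refine Finset.sum_eq_zero fun m _ => ?_
  rw [coeff_monomial, if_neg]
  rintro rfl
  simp at hn

lemma totalDegree_antiY_le (p : MvPolynomial (Fin 2) ℝ) :
    (antiY p).totalDegree ≤ p.totalDegree + 1 := by
  rw [antiY_eq_sum]
  refine totalDegree_finsetSum_le fun m hm => (totalDegree_monomial_le _ _).trans ?_
  rw [Finsupp.sum_add_index' (fun _ => rfl) fun _ _ _ => rfl, Finsupp.sum_single_index rfl]
  exact Nat.add_le_add_right (le_totalDegree hm) 1

lemma degreeOf_zero_antiY_le (p : MvPolynomial (Fin 2) ℝ) :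
    degreeOf 0 (antiY p) ≤ degreeOf 0 p := by
  rw [degreeOf_le_iff]
  intro n hn
  rw [antiY_eq_sum] at hn
  obtain ⟨m, hm, hnm⟩ := Finset.mem_biUnion.mp (support_sum hn)
  rw [Finset.mem_singleton.mp (support_monomial_subset hnm)]
  simpa using monomial_le_degreeOf 0 hm

noncomputable def evalY (p : MvPolynomial (Fin 2) ℝ) (c : ℝ) : MvPolynomial (Fin 2) ℝ :=
  ∑ m ∈ p.support, monomial (Finsupp.single 0 (m 0)) (p.coeff m * c ^ m 1)

lemma ev2_evalY (p : MvPolynomial (Fin 2) ℝ) (c x y : ℝ) : ev2 (evalY p c) x y = ev2 p x c := by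
  rw [evalY, ev2_sum, ev2, eval_eq']
  refine Finset.sum_congr rfl fun m _ => ?_
  simp only [ev2_monomial, Finsupp.single_eq_same, Finsupp.single_eq_of_ne one_ne_zero, pow_zero,
    mul_one, Fin.prod_univ_two, Matrix.cons_val_zero, Matrix.cons_val_one, Matrix.cons_val_fin_one]
  ring

lemma totalDegree_evalY_le (p : MvPolynomial (Fin 2) ℝ) (c : ℝ) :
    (evalY p c).totalDegree ≤ degreeOf 0 p := by
  refine totalDegree_finsetSum_le fun m hm => (totalDegree_monomial_le _ _).trans ?_
  simpa using monomial_le_degreeOf 0 hm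

end Polynomials

section LocalSpaces

variable {k : ℕ}

def memVkSnd (k : ℕ) (q : MvPolynomial (Fin 2) ℝ) : Prop :=
  ∃ p : MvPolynomial (Fin 2) ℝ, ∃ c d : ℝ, p.totalDegree ≤ k - 1 ∧
    q = p + C c * X 1 ^ k + C d * X 0 ^ (k - 1) * X 1

lemma memVkSnd_of_memVk {q₁ q₂ : MvPolynomial (Fin 2) ℝ} (h : memVk k q₁ q₂) :
    memVkSnd k q₂ := by
  obtain ⟨-, p₂, -, -, c, d, -, hp₂, -, rfl⟩ := h
  exact ⟨p₂, c, d, hp₂, rfl⟩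

lemma memVkSnd_rename_swap_of_memVk {q₁ q₂ : MvPolynomial (Fin 2) ℝ} (h : memVk k q₁ q₂) :
    memVkSnd k (rename (Equiv.swap 0 1) q₁) := by
  obtain ⟨p₁, -, a, b, -, -, hp₁, -, rfl, -⟩ := h
  refine ⟨rename (Equiv.swap 0 1) p₁, a, b, (totalDegree_rename_le _ _).trans hp₁, ?_⟩
  simp only [map_add, map_mul, map_pow, rename_C, rename_X, Equiv.swap_apply_left,
    Equiv.swap_apply_right]
  ring

lemma memVkSnd.degreeOf_zero_le {q : MvPolynomial (Fin 2) ℝ} (h : memVkSnd k q) :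
    degreeOf 0 q ≤ k - 1 := by
  obtain ⟨p, c, d, hp, rfl⟩ := h
  refine (degreeOf_add_le _ _ _).trans (max_le ((degreeOf_add_le _ _ _).trans (max_le ?_ ?_)) ?_)
  · exact (degreeOf_le_totalDegree p 0).trans hp
  · exact ((degreeOf_C_mul_le _ _ _).trans (degreeOf_X_pow_of_ne _ (by decide)).le).trans
      (Nat.zero_le _)
  · rw [degreeOf_mul_X_of_ne _ (by decide)]
    exact (degreeOf_C_mul_le _ _ _).trans (degreeOf_X_self_pow _ _).le

lemma antiY_C_mul_X_pow_mul_X_pow (a : ℝ) (i j : ℕ) :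
    antiY (C a * X 0 ^ i * X 1 ^ j) = C (a / (j + 1)) * X 0 ^ i * X 1 ^ (j + 1) := by
  have h (b : ℝ) (n : ℕ) : (C b * X 0 ^ i * X 1 ^ n : MvPolynomial (Fin 2) ℝ) =
      monomial (.single 0 i + .single 1 n) b := by
    rw [C_mul_X_pow_eq_monomial, X_pow_eq_monomial, monomial_mul, mul_one]
  rw [h, h, antiY_monomial, add_assoc, ← Finsupp.single_add]
  simp

lemma memVkSnd.memH2_antiY_add (hk : 1 ≤ k) {q G : MvPolynomial (Fin 2) ℝ} (hq : memVkSnd k q)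
    (hG : G.totalDegree ≤ k - 1) : memH2 k (antiY q + G) := by
  obtain ⟨p, c, d, hp, rfl⟩ := hq
  have hc : antiY (C c * X 1 ^ k) = C (c / (k + 1)) * X 1 ^ (k + 1) := by
    simpa using antiY_C_mul_X_pow_mul_X_pow c 0 k
  have hd : antiY (C d * X 0 ^ (k - 1) * X 1) = C (d / 2) * X 0 ^ (k - 1) * X 1 ^ 2 := by
    simpa [one_add_one_eq_two] using antiY_C_mul_X_pow_mul_X_pow d (k - 1) 1
  refine ⟨antiY p + G, c / (k + 1), d / 2, ⟨?_, ?_⟩, ?_⟩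
  · refine (totalDegree_add _ _).trans (max_le ?_ (hG.trans (Nat.sub_le k 1)))
    exact (totalDegree_antiY_le p).trans (by omega)
  · rw [coeff_add, coeff_antiY_of_eq_zero _ (by simp), zero_add]
    refine coeff_eq_zero_of_totalDegree_lt ?_
    rw [← Finsupp.degree_apply, Finsupp.degree_single]
    omega
  · rw [antiY_add, antiY_add, hc, hd]
    ring

lemma memH1_rename_swap_of_memH2 {q : MvPolynomial (Fin 2) ℝ} (h : memH2 k q) :
    memH1 k (rename (Equiv.swap 0 1) q) := by
  obtain ⟨p, a, b, ⟨hdeg, hcoeff⟩, rfl⟩ := h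
  refine ⟨rename (Equiv.swap 0 1) p, a, b, ⟨(totalDegree_rename_le _ _).trans hdeg, ?_⟩, ?_⟩
  · have := coeff_rename_mapDomain _ (Equiv.swap (0 : Fin 2) 1).injective p (Finsupp.single 0 k)
    rwa [Finsupp.mapDomain_single, Equiv.swap_apply_left, hcoeff] at this
  · simp only [map_add, map_mul, map_pow, rename_C, rename_X, Equiv.swap_apply_left,
      Equiv.swap_apply_right]

end LocalSpaces

section Mesh

open MeasureTheory Set

variable {N : ℕ}

lemma Ix_subset_Ioo {i : ℕ} (hi : i < N) : Ix N i ⊆ Ioo 0 1 := by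
  rintro x ⟨hx₀, hx₁⟩
  have hN : (0 : ℝ) < N := by exact_mod_cast (Nat.zero_le i).trans_lt hi
  refine ⟨lt_of_le_of_lt (by positivity) hx₀, hx₁.trans_le ?_⟩
  rw [div_le_one hN]
  exact_mod_cast hi

lemma exists_mem_Ix (hN : 0 < N) {x : ℝ} (hx : x ∈ Icc 0 1) (hgrid : ∀ i : ℕ, x ≠ i / N) :
    ∃ i < N, x ∈ Ix N i := by
  have hN' : (0 : ℝ) < N := by exact_mod_cast hN
  have hx₁ : x < 1 := lt_of_le_of_ne hx.2 fun h => hgrid N (by rw [h, div_self hN'.ne'])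
  have hfloor : (⌊x * N⌋₊ : ℝ) ≤ x * N := Nat.floor_le (mul_nonneg hx.1 hN'.le)
  refine ⟨⌊x * N⌋₊, ?_, ?_, ?_⟩
  · have : (⌊x * N⌋₊ : ℝ) < N := hfloor.trans_lt (by nlinarith)
    exact_mod_cast this
  · exact lt_of_le_of_ne ((div_le_iff₀ hN').mpr hfloor) (hgrid _).symm
  · rw [lt_div_iff₀ hN']
    exact Nat.lt_floor_add_one _

lemma mem_Ix_or_mem_grid (hN : 0 < N) {x : ℝ} (hx : x ∈ Icc 0 1) :
    (∃ i < N, x ∈ Ix N i) ∨ x ∈ range fun i : ℕ => (i : ℝ) / N := by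
  by_cases hgrid : x ∈ range fun i : ℕ => (i : ℝ) / N
  · exact .inr hgrid
  · exact .inl (exists_mem_Ix hN hx fun i hi => hgrid ⟨i, hi.symm⟩)

lemma volume_grid : volume (range fun i : ℕ => (i : ℝ) / N) = 0 :=
  (countable_range _).measure_zero volume

lemma ae_exists_mem_Ix (hN : 0 < N) : ∀ᵐ x : ℝ, x ∈ Icc 0 1 → ∃ i < N, x ∈ Ix N i := by
  filter_upwards [measure_eq_zero_iff_ae_notMem.mp volume_grid] with x hgrid hx
  exact (mem_Ix_or_mem_grid hN hx).resolve_right hgrid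

def IsPiecewisePoly (N : ℕ) (f : ℝ → ℝ → ℝ) (Q : ℕ → ℕ → MvPolynomial (Fin 2) ℝ) : Prop :=
  ∀ i < N, ∀ j < N, ∀ x ∈ Ix N i, ∀ y ∈ Ix N j, f x y = ev2 (Q i j) x y

namespace IsPiecewisePoly

variable {f : ℝ → ℝ → ℝ} {Q : ℕ → ℕ → MvPolynomial (Fin 2) ℝ}

lemma sq (hf : IsPiecewisePoly N f Q) :
    IsPiecewisePoly N (fun x y => f x y ^ 2) fun i j => Q i j ^ 2 := by
  intro i hi j hj x hx y hy
  simp only [pow_two, ev2_mul, hf i hi j hj x hx y hy]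

lemma swap (hf : IsPiecewisePoly N f Q) :
    IsPiecewisePoly N (fun x y => f y x) fun i j => rename (Equiv.swap 0 1) (Q j i) := by
  intro i hi j hj x hx y hy
  exact (hf j hj i hi y hy x hx).trans (ev2_rename_swap _ x y).symm

lemma intervalIntegrable (hN : 0 < N) (hf : IsPiecewisePoly N f Q) {i : ℕ} (hi : i < N) {x : ℝ}
    (hx : x ∈ Ix N i) : IntervalIntegrable (f x) volume 0 1 := by
  have hcover : Ioc (0 : ℝ) 1 ⊆
      (⋃ j ∈ Finset.range N, Ix N j) ∪ range fun i : ℕ => (i : ℝ) / N := by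
    intro y hy
    rcases mem_Ix_or_mem_grid hN (Ioc_subset_Icc_self hy) with ⟨j, hj, hyj⟩ | hgrid
    · exact .inl (mem_biUnion (Finset.mem_range.mpr hj) hyj)
    · exact .inr hgrid
  rw [intervalIntegrable_iff_integrableOn_Ioc_of_le zero_le_one]
  refine IntegrableOn.mono_set ?_ hcover
  refine IntegrableOn.union ?_ (IntegrableOn.of_measure_zero volume_grid)
  refine integrableOn_finset_iUnion.mpr fun j hj => ?_
  have hcont : Continuous fun y => ev2 (Q i j) x y := by fun_prop
  exact (hcont.integrableOn_Icc.mono_set Ioo_subset_Icc_self).congr_fun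
    (fun y hy => (hf i hi j (Finset.mem_range.mp hj) x hx y hy).symm) measurableSet_Ioo

lemma integrableOn (hN : 0 < N) (hf : IsPiecewisePoly N f Q) :
    IntegrableOn (Function.uncurry f) (Ioc 0 1 ×ˢ Ioc 0 1) := by
  set grid := range fun i : ℕ => (i : ℝ) / N
  have hcover : Ioc (0 : ℝ) 1 ×ˢ Ioc (0 : ℝ) 1 ⊆
      (⋃ i ∈ Finset.range N, ⋃ j ∈ Finset.range N, Ix N i ×ˢ Ix N j) ∪
        (grid ×ˢ univ ∪ univ ×ˢ grid) := by
    rintro ⟨x, y⟩ ⟨hx, hy⟩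
    rcases mem_Ix_or_mem_grid hN (Ioc_subset_Icc_self hx) with ⟨i, hi, hxi⟩ | hxg
    · rcases mem_Ix_or_mem_grid hN (Ioc_subset_Icc_self hy) with ⟨j, hj, hyj⟩ | hyg
      · exact .inl <| mem_biUnion (Finset.mem_range.mpr hi) <|
          mem_biUnion (Finset.mem_range.mpr hj) ⟨hxi, hyj⟩
      · exact .inr (.inr ⟨trivial, hyg⟩)
    · exact .inr (.inl ⟨hxg, trivial⟩)
  have hnull : volume (grid ×ˢ univ ∪ univ ×ˢ grid) = 0 := by
    rw [measure_union_null_iff, Measure.volume_eq_prod ℝ ℝ, Measure.prod_prod, Measure.prod_prod,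
      volume_grid]
    simp
  refine IntegrableOn.mono_set (IntegrableOn.union ?_ (.of_measure_zero hnull)) hcover
  rw [integrableOn_finset_iUnion]
  intro i hi
  rw [integrableOn_finset_iUnion]
  intro j hj
  have hcont : Continuous fun z : ℝ × ℝ => ev2 (Q i j) z.1 z.2 := by fun_prop
  refine ((hcont.continuousOn.integrableOn_compact (isCompact_Icc.prod isCompact_Icc)).mono_set
    (prod_mono Ioo_subset_Icc_self Ioo_subset_Icc_self)).congr_fun ?_
    (measurableSet_Ioo.prod measurableSet_Ioo)
  rintro ⟨x, y⟩ ⟨hx, hy⟩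
  exact (hf i (Finset.mem_range.mp hi) j (Finset.mem_range.mp hj) x hx y hy).symm

end IsPiecewisePoly

section IteratedIntegral

variable {f g : ℝ → ℝ → ℝ}

lemma ii_eq_setIntegral_setIntegral :
    ii f = ∫ x in Ioc (0 : ℝ) 1, ∫ y in Ioc (0 : ℝ) 1, f x y := by
  simp only [ii, intervalIntegral.integral_of_le zero_le_one]

lemma ii_eq_setIntegral (hf : IntegrableOn (Function.uncurry f) (Ioc 0 1 ×ˢ Ioc 0 1)) :
    ii f = ∫ z in Ioc (0 : ℝ) 1 ×ˢ Ioc (0 : ℝ) 1, Function.uncurry f z := by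
  rw [Measure.volume_eq_prod ℝ ℝ] at hf ⊢
  rw [setIntegral_prod _ hf, ii_eq_setIntegral_setIntegral]
  rfl

lemma ii_add (hf : IntegrableOn (Function.uncurry f) (Ioc 0 1 ×ˢ Ioc 0 1))
    (hg : IntegrableOn (Function.uncurry g) (Ioc 0 1 ×ˢ Ioc 0 1)) :
    ii (fun x y => f x y + g x y) = ii f + ii g := by
  rw [ii_eq_setIntegral (f := fun x y => f x y + g x y) (hf.add hg), ii_eq_setIntegral hf,
    ii_eq_setIntegral hg, ← integral_add hf hg]
  rfl

lemma ii_swap (hf : IntegrableOn (Function.uncurry f) (Ioc 0 1 ×ˢ Ioc 0 1)) :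
    ii (fun x y => f y x) = ii f := by
  have hswap : IntegrableOn (Function.uncurry fun x y => f y x) (Ioc 0 1 ×ˢ Ioc 0 1) := by
    rw [Measure.volume_eq_prod ℝ ℝ] at hf ⊢
    exact hf.swap
  rw [ii_eq_setIntegral hf, ii_eq_setIntegral hswap, Measure.volume_eq_prod ℝ ℝ]
  exact setIntegral_prod_swap (μ := volume) (ν := volume) _ _ (Function.uncurry f)

lemma intervalIntegrable_integral_right
    (hf : IntegrableOn (Function.uncurry f) (Ioc 0 1 ×ˢ Ioc 0 1)) :
    IntervalIntegrable (fun x => ∫ y in (0 : ℝ)..1, f x y) volume 0 1 := by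
  rw [Measure.volume_eq_prod ℝ ℝ, IntegrableOn, ← Measure.prod_restrict] at hf
  rw [intervalIntegrable_iff_integrableOn_Ioc_of_le zero_le_one]
  simp only [intervalIntegral.integral_of_le zero_le_one]
  exact hf.integral_prod_left

lemma ii_le_mul_of_integral_le (hN : 0 < N)
    (hf : IntegrableOn (Function.uncurry f) (Ioc 0 1 ×ˢ Ioc 0 1))
    (hg : IntegrableOn (Function.uncurry g) (Ioc 0 1 ×ˢ Ioc 0 1)) {c : ℝ}
    (h : ∀ i < N, ∀ x ∈ Ix N i, ∫ y in (0 : ℝ)..1, f x y ≤ c * ∫ y in (0 : ℝ)..1, g x y) :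
    ii f ≤ c * ii g := by
  rw [ii, ii, ← intervalIntegral.integral_const_mul]
  refine intervalIntegral.integral_mono_ae_restrict zero_le_one
    (intervalIntegrable_integral_right hf) ((intervalIntegrable_integral_right hg).const_mul c) ?_
  refine (ae_restrict_iff' measurableSet_Icc).mpr ?_
  filter_upwards [ae_exists_mem_Ix hN] with x hx hx01
  obtain ⟨i, hi, hxi⟩ := hx hx01
  exact h i hi x hxi

lemma ii_congr (hN : 0 < N)
    (h : ∀ i < N, ∀ j < N, ∀ x ∈ Ix N i, ∀ y ∈ Ix N j, f x y = g x y) : ii f = ii g := by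
  have hsub : uIoc (0 : ℝ) 1 ⊆ Icc 0 1 := by
    rw [uIoc_of_le zero_le_one]
    exact Ioc_subset_Icc_self
  refine intervalIntegral.integral_congr_ae ?_
  filter_upwards [ae_exists_mem_Ix hN] with x hx hx01
  obtain ⟨i, hi, hxi⟩ := hx (hsub hx01)
  refine intervalIntegral.integral_congr_ae ?_
  filter_upwards [ae_exists_mem_Ix hN] with y hy hy01
  obtain ⟨j, hj, hyj⟩ := hy (hsub hy01)
  exact h i hi j hj x hxi y hyj

lemma ii_nonneg (h : ∀ x y, 0 ≤ f x y) : 0 ≤ ii f :=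
  intervalIntegral.integral_nonneg zero_le_one fun x _ =>
    intervalIntegral.integral_nonneg zero_le_one fun y _ => h x y

end IteratedIntegral

end Mesh

section Primitive

open MeasureTheory Set

lemma sq_intervalIntegral_le {f : ℝ → ℝ} {a b : ℝ} (hab : a ≤ b)
    (hf : IntervalIntegrable f volume a b)
    (hf2 : IntervalIntegrable (fun t => f t ^ 2) volume a b) :
    (∫ t in a..b, f t) ^ 2 ≤ (b - a) * ∫ t in a..b, f t ^ 2 := by
  set I := ∫ t in a..b, f t
  set A := ∫ t in a..b, f t ^ 2
  have hsq : 0 ≤ ∫ t in a..b, ((b - a) * f t - I) ^ 2 :=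
    intervalIntegral.integral_nonneg hab fun t _ => sq_nonneg _
  have hexpand : ∫ t in a..b, ((b - a) * f t - I) ^ 2 = (b - a) * ((b - a) * A - I ^ 2) := by
    have h : (fun t => ((b - a) * f t - I) ^ 2) =
        fun t => ((b - a) ^ 2 * f t ^ 2 - 2 * (b - a) * I * f t) + I ^ 2 := by
      funext t
      ring
    rw [h, intervalIntegral.integral_add ((hf2.const_mul _).sub (hf.const_mul _))
      intervalIntegrable_const, intervalIntegral.integral_sub (hf2.const_mul _) (hf.const_mul _),
      intervalIntegral.integral_const_mul, intervalIntegral.integral_const_mul,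
      intervalIntegral.integral_const, smul_eq_mul]
    ring
  rcases hab.eq_or_lt with rfl | hlt
  · simp [I]
  · nlinarith

lemma continuousOn_primitive_Icc {f : ℝ → ℝ} (hf : IntervalIntegrable f volume 0 1) :
    ContinuousOn (fun y => ∫ t in (0 : ℝ)..y, f t) (Icc 0 1) := by
  have hint : IntegrableOn f (uIcc 0 1) := by
    rw [uIcc_of_le zero_le_one]
    exact (intervalIntegrable_iff_integrableOn_Icc_of_le zero_le_one).mp hf
  have := intervalIntegral.continuousOn_primitive_interval hint
  rwa [uIcc_of_le zero_le_one] at this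

/-- Hardy's inequality on `[0, 1]`; the constant `1/2` is `∫₀¹ y dy`. -/
lemma integral_sq_primitive_le {f : ℝ → ℝ} (hf : IntervalIntegrable f volume 0 1)
    (hf2 : IntervalIntegrable (fun t => f t ^ 2) volume 0 1) :
    ∫ y in (0 : ℝ)..1, (∫ t in (0 : ℝ)..y, f t) ^ 2 ≤ 1 / 2 * ∫ t in (0 : ℝ)..1, f t ^ 2 := by
  have hcont := continuousOn_primitive_Icc hf
  have hsub {y : ℝ} (hy : y ∈ Icc (0 : ℝ) 1) : uIcc 0 y ⊆ uIcc 0 1 :=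
    uIcc_subset_uIcc left_mem_uIcc (by rwa [uIcc_of_le zero_le_one])
  calc ∫ y in (0 : ℝ)..1, (∫ t in (0 : ℝ)..y, f t) ^ 2
      ≤ ∫ y in (0 : ℝ)..1, y * ∫ t in (0 : ℝ)..1, f t ^ 2 := by
        refine intervalIntegral.integral_mono_on zero_le_one
          ((hcont.pow 2).intervalIntegrable_of_Icc zero_le_one)
          ((continuous_id.mul continuous_const).intervalIntegrable _ _) fun y hy => ?_
        calc (∫ t in (0 : ℝ)..y, f t) ^ 2 ≤ (y - 0) * ∫ t in (0 : ℝ)..y, f t ^ 2 :=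
              sq_intervalIntegral_le hy.1 (hf.mono_set (hsub hy)) (hf2.mono_set (hsub hy))
          _ ≤ y * ∫ t in (0 : ℝ)..1, f t ^ 2 := by
              rw [sub_zero]
              exact mul_le_mul_of_nonneg_left (intervalIntegral.integral_mono_interval le_rfl hy.1
                hy.2 (.of_forall fun t => sq_nonneg (f t)) hf2) hy.1
    _ = 1 / 2 * ∫ t in (0 : ℝ)..1, f t ^ 2 := by
        rw [intervalIntegral.integral_mul_const, integral_id]
        ring

/-- Definitionally `primX u x y = primY (fun x y => u y x) y x`: every statement about `primX`
is obtained from the one about `primY` by swapping the variables. -/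
noncomputable def primX (u : ℝ → ℝ → ℝ) (x y : ℝ) : ℝ := ∫ t in (0 : ℝ)..x, u t y

noncomputable def primY (u : ℝ → ℝ → ℝ) (x y : ℝ) : ℝ := ∫ t in (0 : ℝ)..y, u x t

/-- On the cell `(i, j)`, `primY u - antiY (Q i j)` is the integral of `u` over the cells below,
minus `antiY (Q i j)` at the bottom edge of the cell: a polynomial in `x` only. -/
noncomputable def cellOffset (N : ℕ) (Q : ℕ → ℕ → MvPolynomial (Fin 2) ℝ) (i j : ℕ) :
    MvPolynomial (Fin 2) ℝ :=
  ∑ l ∈ Finset.range j, (evalY (antiY (Q i l)) ((l + 1) / N) - evalY (antiY (Q i l)) (l / N)) -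
    evalY (antiY (Q i j)) (j / N)

lemma totalDegree_cellOffset_le {N d i j : ℕ} {Q : ℕ → ℕ → MvPolynomial (Fin 2) ℝ}
    (hQ : ∀ l ≤ j, degreeOf 0 (Q i l) ≤ d) : (cellOffset N Q i j).totalDegree ≤ d := by
  have hmem (l : ℕ) (hl : l ≤ j) (c : ℝ) :
      evalY (antiY (Q i l)) c ∈ restrictTotalDegree (Fin 2) ℝ d :=
    (mem_restrictTotalDegree _ _ _).mpr <|
      (totalDegree_evalY_le _ _).trans ((degreeOf_zero_antiY_le _).trans (hQ l hl))
  rw [← mem_restrictTotalDegree (Fin 2) (R := ℝ)]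
  refine sub_mem (Submodule.sum_mem _ fun l hl => sub_mem (hmem l ?_ _) (hmem l ?_ _))
    (hmem j le_rfl _) <;> exact (Finset.mem_range.mp hl).le

lemma integral_eq_ev2_antiY_sub {g : ℝ → ℝ} {q : MvPolynomial (Fin 2) ℝ} {x a b : ℝ} (hab : a ≤ b)
    (h : EqOn g (ev2 q x) (Ioo a b)) :
    ∫ t in a..b, g t = ev2 (antiY q) x b - ev2 (antiY q) x a := by
  rw [intervalIntegral.integral_congr_ae (g := ev2 q x) ?_]
  · exact intervalIntegral.integral_eq_sub_of_hasDerivAt (fun t _ => hasDerivAt_ev2_antiY q x t)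
      ((by fun_prop : Continuous fun t => ev2 q x t).intervalIntegrable a b)
  · filter_upwards [Measure.ae_ne volume b] with t htb ht
    rw [uIoc_of_le hab] at ht
    exact h ⟨ht.1, lt_of_le_of_ne ht.2 htb⟩

namespace IsPiecewisePoly

variable {N : ℕ} {u : ℝ → ℝ → ℝ} {Q : ℕ → ℕ → MvPolynomial (Fin 2) ℝ}

lemma primY (hN : 0 < N) (hu : IsPiecewisePoly N u Q) :
    IsPiecewisePoly N (primY u) fun i j => antiY (Q i j) + cellOffset N Q i j := by
  intro i hi j hj x hx y hy
  have hint := hu.intervalIntegrable hN hi hx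
  have hgrid {l : ℕ} (hl : l ≤ N) : (l : ℝ) / N ∈ uIcc 0 1 := by
    rw [uIcc_of_le zero_le_one]
    exact ⟨by positivity, div_le_one_of_le₀ (by exact_mod_cast hl) (Nat.cast_nonneg N)⟩
  have hy01 : y ∈ uIcc 0 1 := by
    rw [uIcc_of_le zero_le_one]
    exact Ioo_subset_Icc_self (Ix_subset_Ioo hj hy)
  have hcell {l : ℕ} (hl : l < N) {a b : ℝ} (ha : l / N ≤ a) (hab : a ≤ b) (hb : b ≤ (l + 1) / N) :
      ∫ t in a..b, u x t = ev2 (antiY (Q i l)) x b - ev2 (antiY (Q i l)) x a :=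
    integral_eq_ev2_antiY_sub hab fun t ht =>
      hu i hi l hl x hx t ⟨ha.trans_lt ht.1, ht.2.trans_le hb⟩
  have hbelow : ∫ t in (0 : ℝ)..(j / N), u x t =
      ∑ l ∈ Finset.range j, ∫ t in (l / N : ℝ)..((l + 1) / N), u x t := by
    have := intervalIntegral.sum_integral_adjacent_intervals (a := fun l : ℕ => (l : ℝ) / N)
      (n := j) fun l hl => hint.mono_set (uIcc_subset_uIcc (hgrid (by omega)) (hgrid (by omega)))
    simpa using this.symm
  show ∫ t in (0 : ℝ)..y, u x t = _
  rw [← intervalIntegral.integral_add_adjacent_intervals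
    (hint.mono_set (uIcc_subset_uIcc left_mem_uIcc (hgrid hj.le)))
    (hint.mono_set (uIcc_subset_uIcc (hgrid hj.le) hy01)), hbelow,
    Finset.sum_congr rfl fun l hl => hcell ((Finset.mem_range.mp hl).trans hj) le_rfl
      (div_le_div_of_nonneg_right (by linarith) (Nat.cast_nonneg N)) le_rfl,
    hcell hj le_rfl hy.1.le hy.2.le]
  simp only [cellOffset, ev2_add, ev2_sub, ev2_sum, ev2_evalY]
  ring

lemma hasDerivAt_primY (hN : 0 < N) (hu : IsPiecewisePoly N u Q) {i j : ℕ} (hi : i < N)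
    (hj : j < N) {x y : ℝ} (hx : x ∈ Ix N i) (hy : y ∈ Ix N j) :
    HasDerivAt (_root_.primY u x) (u x y) y := by
  have hcont : Continuous fun t => ev2 (Q i j) x t := by fun_prop
  have hloc : EqOn (fun t => ev2 (Q i j) x t) (u x) (Ix N j) :=
    fun t ht => (hu i hi j hj x hx t ht).symm
  have hy01 : y ∈ uIcc 0 1 := by
    rw [uIcc_of_le zero_le_one]
    exact Ioo_subset_Icc_self (Ix_subset_Ioo hj hy)
  refine intervalIntegral.integral_hasDerivAt_right
    ((hu.intervalIntegrable hN hi hx).mono_set (uIcc_subset_uIcc left_mem_uIcc hy01))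
    ((hcont.continuousOn.congr hloc.symm).stronglyMeasurableAtFilter isOpen_Ioo y hy) ?_
  exact hcont.continuousAt.congr (Filter.eventually_of_mem (isOpen_Ioo.mem_nhds hy) hloc)

lemma continuousOn_primY (hN : 0 < N) (hu : IsPiecewisePoly N u Q) {i : ℕ} (hi : i < N) {x : ℝ}
    (hx : x ∈ Ix N i) : ContinuousOn (_root_.primY u x) (Icc 0 1) :=
  continuousOn_primitive_Icc (hu.intervalIntegrable hN hi hx)

lemma ii_sq_primY_le (hN : 0 < N) (hu : IsPiecewisePoly N u Q) :
    ii (fun x y => _root_.primY u x y ^ 2) ≤ 1 / 2 * ii (fun x y => u x y ^ 2) :=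
  ii_le_mul_of_integral_le hN ((hu.primY hN).sq.integrableOn hN) (hu.sq.integrableOn hN)
    fun _ hi _ hx =>
      integral_sq_primitive_le (hu.intervalIntegrable hN hi hx) (hu.sq.intervalIntegrable hN hi hx)

end IsPiecewisePoly

end Primitive

section InfSup

open MeasureTheory Set

variable {k N : ℕ} {v₁ v₂ : ℝ → ℝ → ℝ} {P Q : ℕ → ℕ → MvPolynomial (Fin 2) ℝ}

lemma exists_isPiecewisePoly_of_meshVk (hv : meshVk k N v₁ v₂) :
    ∃ P Q : ℕ → ℕ → MvPolynomial (Fin 2) ℝ, IsPiecewisePoly N v₁ P ∧ IsPiecewisePoly N v₂ Q ∧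
      ∀ i < N, ∀ j < N, memVk k (P i j) (Q i j) := by
  have h (i j : ℕ) : ∃ q₁ q₂ : MvPolynomial (Fin 2) ℝ, i < N → j < N → memVk k q₁ q₂ ∧
      ∀ x y, x ∈ Ix N i → y ∈ Ix N j → v₁ x y = ev2 q₁ x y ∧ v₂ x y = ev2 q₂ x y := by
    by_cases hij : i < N ∧ j < N
    · obtain ⟨q₁, q₂, hq⟩ := hv i j hij.1 hij.2
      exact ⟨q₁, q₂, fun _ _ => hq⟩
    · exact ⟨0, 0, fun hi hj => absurd ⟨hi, hj⟩ hij⟩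
  choose P Q hPQ using h
  exact ⟨P, Q, fun i hi j hj x hx y hy => ((hPQ i j hi hj).2 x y hx hy).1,
    fun i hi j hj x hx y hy => ((hPQ i j hi hj).2 x y hx hy).2, fun i hi j hj => (hPQ i j hi hj).1⟩

lemma memH2_antiY_add_cellOffset (hk : 1 ≤ k) (hQ : ∀ i < N, ∀ j < N, memVkSnd k (Q i j)) {i j : ℕ}
    (hi : i < N) (hj : j < N) : memH2 k (antiY (Q i j) + cellOffset N Q i j) :=
  (hQ i hi j hj).memH2_antiY_add hk
    (totalDegree_cellOffset_le fun l hl => (hQ i hi l (by omega)).degreeOf_zero_le)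

lemma meshSigma_primX_primY (hk : 1 ≤ k) (hN : 0 < N) (hv₁ : IsPiecewisePoly N v₁ P)
    (hv₂ : IsPiecewisePoly N v₂ Q) (hPQ : ∀ i < N, ∀ j < N, memVk k (P i j) (Q i j)) :
    meshSigma k N (primX v₁) (fun _ _ => 0) (primY v₂) := by
  have hP : ∀ i < N, ∀ j < N, memVkSnd k (rename (Equiv.swap 0 1) (P j i)) :=
    fun i hi j hj => memVkSnd_rename_swap_of_memVk (hPQ j hj i hi)
  have hQ : ∀ i < N, ∀ j < N, memVkSnd k (Q i j) :=
    fun i hi j hj => memVkSnd_of_memVk (hPQ i hi j hj)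
  have h₁₁ := (hv₁.swap.primY hN).swap
  have h₂₂ := hv₂.primY hN
  refine ⟨fun i j hi hj => ⟨_, _, 0, memH1_rename_swap_of_memH2
    (memH2_antiY_add_cellOffset hk hP hj hi), memH2_antiY_add_cellOffset hk hQ hi hj,
    ⟨0, 0, 0, by simp, by simp⟩,
    fun x y hx hy => ⟨h₁₁ i hi j hj x hx y hy, h₂₂ i hi j hj x hx y hy, by simp [ev2]⟩⟩,
    fun y hy hgrid => ?_, fun x hx hgrid => ?_, continuousOn_const⟩
  · obtain ⟨j, hj, hyj⟩ := exists_mem_Ix hN (Ioo_subset_Icc_self hy) hgrid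
    exact hv₁.swap.continuousOn_primY hN hj hyj
  · obtain ⟨i, hi, hxi⟩ := exists_mem_Ix hN (Ioo_subset_Icc_self hx) hgrid
    exact hv₂.continuousOn_primY hN hi hxi

lemma div1_primX (hN : 0 < N) (hv₁ : IsPiecewisePoly N v₁ P) {i j : ℕ} (hi : i < N) (hj : j < N)
    {x y : ℝ} (hx : x ∈ Ix N i) (hy : y ∈ Ix N j) :
    div1 (primX v₁) (fun _ _ => 0) x y = v₁ x y := by
  simp only [div1, Dx, Dy, deriv_const', add_zero]
  exact (hv₁.swap.hasDerivAt_primY hN hj hi hy hx).deriv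

lemma div2_primY (hN : 0 < N) (hv₂ : IsPiecewisePoly N v₂ Q) {i j : ℕ} (hi : i < N) (hj : j < N)
    {x y : ℝ} (hx : x ∈ Ix N i) (hy : y ∈ Ix N j) :
    div2 (fun _ _ => 0) (primY v₂) x y = v₂ x y := by
  simp only [div2, Dx, Dy, deriv_const', zero_add]
  exact (hv₂.hasDerivAt_primY hN hi hj hx hy).deriv

lemma pairDiv_primX_primY (hN : 0 < N) (hv₁ : IsPiecewisePoly N v₁ P)
    (hv₂ : IsPiecewisePoly N v₂ Q) :
    pairDiv (primX v₁) (fun _ _ => 0) (primY v₂) v₁ v₂ = vNormSq v₁ v₂ :=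
  ii_congr hN fun _ hi _ hj _ hx _ hy => by
    rw [div1_primX hN hv₁ hi hj hx hy, div2_primY hN hv₂ hi hj hx hy, sq, sq]

lemma vNormSq_eq_add (hN : 0 < N) (hv₁ : IsPiecewisePoly N v₁ P) (hv₂ : IsPiecewisePoly N v₂ Q) :
    vNormSq v₁ v₂ = ii (fun x y => v₁ x y ^ 2) + ii (fun x y => v₂ x y ^ 2) :=
  ii_add (hv₁.sq.integrableOn hN) (hv₂.sq.integrableOn hN)

lemma hdivNormSq_primX_primY (hN : 0 < N) (hv₁ : IsPiecewisePoly N v₁ P)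
    (hv₂ : IsPiecewisePoly N v₂ Q) :
    hdivNormSq (primX v₁) (fun _ _ => 0) (primY v₂) =
      ii (fun x y => primX v₁ x y ^ 2) + ii (fun x y => primY v₂ x y ^ 2) + vNormSq v₁ v₂ := by
  have h₁₁ : IntegrableOn (Function.uncurry fun x y => primX v₁ x y ^ 2) (Ioc 0 1 ×ˢ Ioc 0 1) :=
    (hv₁.swap.primY hN).swap.sq.integrableOn hN
  rw [hdivNormSq, ← ii_add h₁₁ ((hv₂.primY hN).sq.integrableOn hN)]
  congr 1
  · simp
  · exact ii_congr hN fun _ hi _ hj _ hx _ hy => by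
      rw [div1_primX hN hv₁ hi hj hx hy, div2_primY hN hv₂ hi hj hx hy]

lemma ii_sq_primX_le (hN : 0 < N) (hv₁ : IsPiecewisePoly N v₁ P) :
    ii (fun x y => primX v₁ x y ^ 2) ≤ 1 / 2 * ii (fun x y => v₁ x y ^ 2) := by
  have hu := hv₁.swap
  calc ii (fun x y => primX v₁ x y ^ 2) = ii (fun x y => primY (fun x y => v₁ y x) x y ^ 2) :=
        ii_swap ((hu.primY hN).sq.integrableOn hN)
    _ ≤ 1 / 2 * ii (fun x y => v₁ y x ^ 2) := hu.ii_sq_primY_le hN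
    _ = 1 / 2 * ii (fun x y => v₁ x y ^ 2) := by rw [ii_swap (hv₁.sq.integrableOn hN)]

lemma vNormSq_le_hdivNormSq_primX_primY (hN : 0 < N) (hv₁ : IsPiecewisePoly N v₁ P)
    (hv₂ : IsPiecewisePoly N v₂ Q) :
    vNormSq v₁ v₂ ≤ hdivNormSq (primX v₁) (fun _ _ => 0) (primY v₂) := by
  rw [hdivNormSq_primX_primY hN hv₁ hv₂]
  linarith [ii_nonneg fun x y => sq_nonneg (primX v₁ x y),
    ii_nonneg fun x y => sq_nonneg (primY v₂ x y)]

lemma hdivNormSq_primX_primY_le (hN : 0 < N) (hv₁ : IsPiecewisePoly N v₁ P)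
    (hv₂ : IsPiecewisePoly N v₂ Q) :
    hdivNormSq (primX v₁) (fun _ _ => 0) (primY v₂) ≤ 3 / 2 * vNormSq v₁ v₂ := by
  rw [hdivNormSq_primX_primY hN hv₁ hv₂, vNormSq_eq_add hN hv₁ hv₂]
  linarith [ii_sq_primX_le hN hv₁, hv₂.ii_sq_primY_le hN]

lemma meshSigma_const (hk : 1 ≤ k) :
    meshSigma k N (fun _ _ => 1) (fun _ _ => 0) (fun _ _ => 0) := by
  refine ⟨fun i _ j _ => ⟨C 1, 0, 0, ⟨C 1, 0, 0, ⟨by simp, ?_⟩, by simp⟩,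
    ⟨0, 0, 0, ⟨by simp, by simp⟩, by simp⟩, ⟨0, 0, 0, by simp, by simp⟩,
    fun x y _ _ => by simp [ev2]⟩,
    fun _ _ _ => continuousOn_const, fun _ _ _ => continuousOn_const, continuousOn_const⟩
  rw [coeff_C, if_neg (Finsupp.single_ne_zero.mpr (by omega)).symm]

lemma hdivNormSq_const : hdivNormSq (fun _ _ => 1) (fun _ _ => 0) (fun _ _ => 0) = 1 := by
  simp [hdivNormSq, ii, div1, div2, Dx, Dy]

lemma pairDiv_const : pairDiv (fun _ _ => 1) (fun _ _ => 0) (fun _ _ => 0) v₁ v₂ = 0 := by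
  simp [pairDiv, ii, div1, div2, Dx, Dy]

lemma sqrt_mul_sqrt_mul_sqrt_le {c a b : ℝ} (hc : 0 ≤ c) (ha : 0 ≤ a) (hb : c * b ≤ a) :
    √c * √a * √b ≤ a := by
  rw [← Real.sqrt_mul hc, ← Real.sqrt_mul (mul_nonneg hc ha), Real.sqrt_le_left ha]
  nlinarith

end InfSup

theorem discrete_inf_sup (k N : ℕ) (hk : 1 ≤ k) (hN : 0 < N)
    (v1 v2 : ℝ → ℝ → ℝ) (hv : meshVk k N v1 v2) :
    ∃ t11 t12 t22 : ℝ → ℝ → ℝ, meshSigma k N t11 t12 t22 ∧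
      0 < hdivNormSq t11 t12 t22 ∧
      pairDiv t11 t12 t22 v1 v2 ≥
        Real.sqrt (2 / 3) * Real.sqrt (vNormSq v1 v2) * Real.sqrt (hdivNormSq t11 t12 t22) := by
  obtain ⟨P, Q, hv₁, hv₂, hPQ⟩ := exists_isPiecewisePoly_of_meshVk hv
  have hV : 0 ≤ vNormSq v1 v2 := ii_nonneg fun x y => by positivity
  rcases hV.eq_or_lt with hV₀ | hV₀
  · refine ⟨_, _, _, meshSigma_const hk, by rw [hdivNormSq_const]; exact one_pos, ?_⟩
    rw [pairDiv_const, ← hV₀]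
    simp
  · refine ⟨_, _, _, meshSigma_primX_primY hk hN hv₁ hv₂ hPQ,
      hV₀.trans_le (vNormSq_le_hdivNormSq_primX_primY hN hv₁ hv₂), ?_⟩
    rw [ge_iff_le, pairDiv_primX_primY hN hv₁ hv₂]
    exact sqrt_mul_sqrt_mul_sqrt_le (by norm_num) hV
      (by linarith [hdivNormSq_primX_primY_le hN hv₁ hv₂])
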